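/- Let ‖·‖ be a monotone norm on ℝ^K, let p̄ > 0, let C := {p ∈ ℝ_{≥0}^K : ‖p‖ ≤ p̄}, and let utility functions u_1,…,u_K satisfy Assumption 1. Denote by B ⊆ ℝ_{≥0}^K the set of utility tuples on the weak Pareto boundary under the constraint C, i.e., B := {(u_1(p*),…,u_K(p*)) : p* ∈ C and there is no p' ∈ C with u_k(p') > u_k(p*) for all k}. Then B = {(u_1(p),…,u_K(p)) : p ∈ ℝ_{≥0}^K and ‖p‖ = p̄}. -/

import Mathlib

open Filter Topology MeasureTheory

/-- The nonnegative orthant of `ℝ^K`. -/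
def NonnegOrth (K : ℕ) : Set (Fin K → ℝ) := {x | ∀ i, 0 ≤ x i}

/-- A standard interference function: positive, monotone and scalable on the
nonnegative orthant. -/
def StdIF {K : ℕ} (f : (Fin K → ℝ) → ℝ) : Prop :=
  (∀ x ∈ NonnegOrth K, 0 < f x) ∧
  (∀ x ∈ NonnegOrth K, ∀ y ∈ NonnegOrth K, (∀ i, y i ≤ x i) → f y ≤ f x) ∧
  (∀ x ∈ NonnegOrth K, ∀ α : ℝ, 1 < α → f (α • x) < α * f x)

/-- Assumption 1: each utility `u k` equals `p k / f k p` on the nonnegative orthant,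
for a continuous standard interference function `f k`. -/
def Assumption1 {K : ℕ} (u f : Fin K → (Fin K → ℝ) → ℝ) : Prop :=
  ∀ k, StdIF (f k) ∧ ContinuousOn (f k) (NonnegOrth K) ∧
    ∀ p ∈ NonnegOrth K, u k p = p k / f k p

/-- A monotone norm on `ℝ^K`. -/
def IsMonoNorm {K : ℕ} (N : (Fin K → ℝ) → ℝ) : Prop :=
  (∀ x, 0 ≤ N x) ∧ (∀ x, N x = 0 ↔ x = 0) ∧
  (∀ (a : ℝ) (x : Fin K → ℝ), N (a • x) = |a| * N x) ∧
  (∀ x y, N (x + y) ≤ N x + N y) ∧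
  (∀ x y : Fin K → ℝ, x ∈ NonnegOrth K → (∀ i, x i ≤ y i) → N x ≤ N y)

/-- The utilities of `p` are on the weak Pareto boundary under the constraint `C`. -/
def WeakPareto {K : ℕ} (u : Fin K → (Fin K → ℝ) → ℝ)
    (C : Set (Fin K → ℝ)) (p : Fin K → ℝ) : Prop :=
  ¬ ∃ p' ∈ C, ∀ k, u k p < u k p'

/-- Feasibility for the weighted max-min problem (1). -/
def Feas1 {K : ℕ} (N : (Fin K → ℝ) → ℝ) (pbar : ℝ) (p : Fin K → ℝ) : Prop :=
  p ∈ NonnegOrth K ∧ N p ≤ pbar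

/-- Optimality for the weighted max-min problem (1):
maximize `min_k (ω k)⁻¹ * u k p` subject to `‖p‖ ≤ pbar`. -/
def Sol1 {K : ℕ} (N : (Fin K → ℝ) → ℝ) (pbar : ℝ) (ω : Fin K → ℝ)
    (u : Fin K → (Fin K → ℝ) → ℝ) (p : Fin K → ℝ) : Prop :=
  Feas1 N pbar p ∧ ∀ q, Feas1 N pbar q →
    (⨅ k, (ω k)⁻¹ * u k q) ≤ ⨅ k, (ω k)⁻¹ * u k p

/-- Feasibility for the epigraph-form problem (2). -/
def Feas2 {K : ℕ} (N : (Fin K → ℝ) → ℝ) (pbar : ℝ) (ω : Fin K → ℝ)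
    (u : Fin K → (Fin K → ℝ) → ℝ) (c : ℝ) (p : Fin K → ℝ) : Prop :=
  0 ≤ c ∧ p ∈ NonnegOrth K ∧ N p ≤ pbar ∧ ∀ k, c * ω k ≤ u k p

/-- Optimality for the epigraph-form problem (2): maximize `c` subject to
`‖p‖ ≤ pbar` and `u k p ≥ c * ω k` for all `k`. -/
def Sol2 {K : ℕ} (N : (Fin K → ℝ) → ℝ) (pbar : ℝ) (ω : Fin K → ℝ)
    (u : Fin K → (Fin K → ℝ) → ℝ) (c : ℝ) (p : Fin K → ℝ) : Prop :=
  Feas2 N pbar ω u c p ∧ ∀ c' p', Feas2 N pbar ω u c' p' → c' ≤ c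

/-- Feasibility for the fixed-point-form problem (4). -/
def Feas4 {K : ℕ} (N : (Fin K → ℝ) → ℝ) (pbar : ℝ)
    (T : (Fin K → ℝ) → Fin K → ℝ) (c : ℝ) (p : Fin K → ℝ) : Prop :=
  0 ≤ c ∧ p ∈ NonnegOrth K ∧ N p ≤ pbar ∧ p = c • T p

/-- Optimality for the fixed-point-form problem (4): maximize `c` subject to
`‖p‖ ≤ pbar` and `p = c • T p`. -/
def Sol4 {K : ℕ} (N : (Fin K → ℝ) → ℝ) (pbar : ℝ)
    (T : (Fin K → ℝ) → Fin K → ℝ) (c : ℝ) (p : Fin K → ℝ) : Prop :=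
  Feas4 N pbar T c p ∧ ∀ c' p', Feas4 N pbar T c' p' → c' ≤ c

lemma smul_mem_nonnegOrth {K : ℕ} {c : ℝ} {x : Fin K → ℝ} (hc : 0 ≤ c)
    (hx : x ∈ NonnegOrth K) : c • x ∈ NonnegOrth K :=
  fun i => mul_nonneg hc (hx i)

lemma StdIF.apply_smul_le {K : ℕ} {f : (Fin K → ℝ) → ℝ} (hf : StdIF f) {x : Fin K → ℝ}
    (hx : x ∈ NonnegOrth K) {α : ℝ} (hα : 1 ≤ α) : f (α • x) ≤ α * f x := by
  rcases hα.eq_or_lt with rfl | hα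
  · simp
  · exact (hf.2.2 x hx α hα).le

namespace IsMonoNorm

variable {K : ℕ} {N : (Fin K → ℝ) → ℝ}

lemma smul_of_nonneg (hN : IsMonoNorm N) {c : ℝ} (hc : 0 ≤ c) (x : Fin K → ℝ) :
    N (c • x) = c * N x := by
  rw [hN.2.2.1, abs_of_nonneg hc]

lemma pos_of_ne_zero (hN : IsMonoNorm N) {x : Fin K → ℝ} (hx : x ≠ 0) : 0 < N x :=
  (hN.1 x).lt_of_ne fun h => hx ((hN.2.1 x).1 h.symm)

end IsMonoNorm

namespace Assumption1

variable {K : ℕ} {u f : Fin K → (Fin K → ℝ) → ℝ} {p q : Fin K → ℝ}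

lemma utility_nonneg (hA : Assumption1 u f) (hp : p ∈ NonnegOrth K) (k : Fin K) :
    0 ≤ u k p := by
  rw [(hA k).2.2 p hp]
  exact div_nonneg (hp k) ((hA k).1.1 p hp).le

lemma utility_eq_zero (hA : Assumption1 u f) (hp : p ∈ NonnegOrth K) {k : Fin K}
    (hpk : p k = 0) : u k p = 0 := by
  rw [(hA k).2.2 p hp, hpk, zero_div]

lemma utility_pos (hA : Assumption1 u f) (hp : p ∈ NonnegOrth K) {k : Fin K}
    (hpk : 0 < p k) : 0 < u k p := by
  rw [(hA k).2.2 p hp]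
  exact div_pos hpk ((hA k).1.1 p hp)

lemma continuousOn_utility (hA : Assumption1 u f) (k : Fin K) :
    ContinuousOn (u k) (NonnegOrth K) :=
  ((continuous_apply k).continuousOn.div (hA k).2.1 fun p hp => ((hA k).1.1 p hp).ne').congr
    (hA k).2.2

lemma utility_lt_utility_smul (hA : Assumption1 u f) (hp : p ∈ NonnegOrth K) {k : Fin K}
    (hpk : 0 < p k) {t : ℝ} (ht : 1 < t) : u k p < u k (t • p) := by
  have ht0 : 0 < t := one_pos.trans ht
  rw [(hA k).2.2 p hp, (hA k).2.2 _ (smul_mem_nonnegOrth ht0.le hp), Pi.smul_apply,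
    smul_eq_mul, ← mul_div_mul_left (p k) (f k p) ht0.ne']
  exact div_lt_div_of_pos_left (mul_pos ht0 hpk)
    ((hA k).1.1 _ (smul_mem_nonnegOrth ht0.le hp)) ((hA k).1.2.2 p hp t ht)

lemma utility_le_of_le_smul (hA : Assumption1 u f) (hp : p ∈ NonnegOrth K)
    (hq : q ∈ NonnegOrth K) {α : ℝ} (hα : 1 ≤ α) (hle : ∀ i, p i ≤ α * q i) {k : Fin K}
    (hk : p k = α * q k) : u k q ≤ u k p := by
  have hα0 : 0 < α := one_pos.trans_le hα
  have hαq := smul_mem_nonnegOrth hα0.le hq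
  have hf : f k p ≤ α * f k q :=
    ((hA k).1.2.1 _ hαq p hp hle).trans ((hA k).1.apply_smul_le hq hα)
  rw [(hA k).2.2 p hp, (hA k).2.2 q hq, hk, ← mul_div_mul_left (q k) (f k q) hα0.ne']
  exact div_le_div_of_nonneg_left (mul_nonneg hα0.le (hq k)) ((hA k).1.1 p hp) hf

/-- Scaling `q` up until it dominates `p` touches `p` in some coordinate `k`; since the scale
is at least `1`, scalability of `f k` means user `k` does no better under `q` than under `p`. -/
lemma exists_utility_le_of_norm_le (hA : Assumption1 u f) {N : (Fin K → ℝ) → ℝ}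
    (hN : IsMonoNorm N) (hp : p ∈ NonnegOrth K) (hq : q ∈ NonnegOrth K) (hNq : N q ≤ N p)
    (hp0 : p ≠ 0) : ∃ k, u k q ≤ u k p := by
  by_cases hq0 : ∃ k, q k = 0
  · obtain ⟨k, hk⟩ := hq0
    exact ⟨k, (hA.utility_eq_zero hq hk).trans_le (hA.utility_nonneg hp k)⟩
  simp only [not_exists] at hq0
  have hqpos : ∀ i, 0 < q i := fun i => (hq i).lt_of_ne fun h => hq0 i h.symm
  obtain ⟨i, -⟩ := Function.ne_iff.1 hp0
  have : Nonempty (Fin K) := ⟨i⟩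
  obtain ⟨k, hk⟩ := Finite.exists_max fun i => p i / q i
  set α := p k / q k
  have hα0 : 0 ≤ α := div_nonneg (hp k) (hqpos k).le
  have hle : ∀ i, p i ≤ α * q i := fun i => (div_le_iff₀ (hqpos i)).1 (hk i)
  have hα : 1 ≤ α := by
    have hNp : N p ≤ α * N p :=
      calc N p ≤ N (α • q) := hN.2.2.2.2 p _ hp hle
        _ = α * N q := hN.smul_of_nonneg hα0 q
        _ ≤ α * N p := mul_le_mul_of_nonneg_left hNq hα0
    exact (le_mul_iff_one_le_left (hN.pos_of_ne_zero hp0)).1 hNp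
  exact ⟨k, hA.utility_le_of_le_smul hp hq hα hle (div_mul_cancel₀ _ (hqpos k).ne').symm⟩

/-- Scaling `p` by `t > 1` strictly raises every positive coordinate's utility, and adding
`ε • 1` makes the zero coordinates' utilities positive; by continuity of the utilities a
small enough `ε` keeps the first gain, and the norm stays below `pbar`. -/
lemma exists_utility_lt_of_norm_lt (hA : Assumption1 u f) {N : (Fin K → ℝ) → ℝ}
    (hN : IsMonoNorm N) {pbar : ℝ} (hp : p ∈ NonnegOrth K) (hNp : N p < pbar) :
    ∃ q ∈ {q | q ∈ NonnegOrth K ∧ N q ≤ pbar}, ∀ k, u k p < u k q := by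
  obtain ⟨t, htN, ht⟩ : ∃ t, t * N p < pbar ∧ 1 < t := by
    have hlim : Tendsto (fun t => t * N p) (𝓝[>] 1) (𝓝 (1 * N p)) :=
      (continuous_id.mul continuous_const).continuousWithinAt
    exact ((hlim.eventually_lt_const (by simpa using hNp)).and self_mem_nhdsWithin).exists
  have ht0 : 0 < t := one_pos.trans ht
  set r : ℝ → Fin K → ℝ := fun ε => t • p + ε • 1 with hr
  have hr0 : r 0 = t • p := by simp [hr]
  have hrk (ε : ℝ) (k : Fin K) : r ε k = t * p k + ε := by simp [hr]
  have hrmem (ε : ℝ) (hε : 0 ≤ ε) : r ε ∈ NonnegOrth K := fun k => by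
    rw [hrk]
    exact add_nonneg (mul_nonneg ht0.le (hp k)) hε
  have hnorm : ∀ᶠ ε in 𝓝[>] 0, N (r ε) ≤ pbar := by
    have hlim : Tendsto (fun ε => t * N p + ε * N 1) (𝓝[>] 0) (𝓝 (t * N p + 0 * N 1)) :=
      (continuous_const.add (continuous_id.mul continuous_const)).continuousWithinAt
    filter_upwards [hlim.eventually_lt_const (by simpa using htN), self_mem_nhdsWithin]
      with ε hε hε0
    calc N (r ε) ≤ N (t • p) + N (ε • 1) := hN.2.2.2.1 _ _
      _ = t * N p + ε * N 1 := by
        rw [hN.smul_of_nonneg ht0.le, hN.smul_of_nonneg (le_of_lt hε0)]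
      _ ≤ pbar := hε.le
  have hutil (k : Fin K) : ∀ᶠ ε in 𝓝[>] 0, u k p < u k (r ε) := by
    rcases (hp k).eq_or_lt with hpk | hpk
    · filter_upwards [self_mem_nhdsWithin] with ε (hε : 0 < ε)
      rw [hA.utility_eq_zero hp hpk.symm]
      exact hA.utility_pos (hrmem ε hε.le) (by rw [hrk, ← hpk, mul_zero, zero_add]; exact hε)
    · have hlim : Tendsto (fun ε => u k (r ε)) (𝓝[>] 0) (𝓝 (u k (t • p))) := by
        rw [← hr0]
        exact ((hA.continuousOn_utility k).continuousWithinAt (hrmem 0 le_rfl)).comp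
          (by fun_prop : Continuous r).continuousWithinAt fun ε hε => hrmem ε (le_of_lt hε)
      exact hlim.eventually_const_lt (hA.utility_lt_utility_smul hp hpk ht)
  obtain ⟨ε, ⟨hNr, hlt⟩, hε⟩ :=
    ((hnorm.and (eventually_all.2 hutil)).and self_mem_nhdsWithin).exists
  exact ⟨r ε, ⟨hrmem ε (le_of_lt hε), hNr⟩, hlt⟩

end Assumption1

/-- Corollary 1: the set of utility tuples on the weak Pareto boundary under
`C = {p ≥ 0 : ‖p‖ ≤ pbar}` is exactly the set of utility tuples of nonnegative
vectors of norm exactly `pbar`. -/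
theorem stmt11 {K : ℕ} (N : (Fin K → ℝ) → ℝ) (hN : IsMonoNorm N)
    (pbar : ℝ) (hpbar : 0 < pbar)
    (u f : Fin K → (Fin K → ℝ) → ℝ) (hA : Assumption1 u f) :
    {b : Fin K → ℝ | ∃ p, (p ∈ NonnegOrth K ∧ N p ≤ pbar) ∧
        WeakPareto u {q | q ∈ NonnegOrth K ∧ N q ≤ pbar} p ∧ b = fun k => u k p} =
    {b : Fin K → ℝ | ∃ p, p ∈ NonnegOrth K ∧ N p = pbar ∧ b = fun k => u k p} := by
  ext b
  constructor
  · rintro ⟨p, ⟨hp, hNp⟩, hpareto, rfl⟩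
    refine ⟨p, hp, hNp.eq_of_not_lt fun hlt => ?_, rfl⟩
    exact hpareto (hA.exists_utility_lt_of_norm_lt hN hp hlt)
  · rintro ⟨p, hp, rfl, rfl⟩
    refine ⟨p, ⟨hp, le_rfl⟩, ?_, rfl⟩
    rintro ⟨q, ⟨hq, hNq⟩, hdom⟩
    have hp0 : p ≠ 0 := fun h => hpbar.ne' ((hN.2.1 p).2 h)
    obtain ⟨k, hk⟩ := hA.exists_utility_le_of_norm_le hN hp hq hNq hp0
    exact (hdom k).not_ge hk
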